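/- A finite-dimensional complex *-algebra admits a C*-algebra norm if and only if it admits an inner product making it a special unitary dagger Frobenius involution monoid in the category of finite-dimensional Hilbert spaces; moreover, when these exist, both the C*-norm and the inner product making it special unitary dagger Frobenius are unique. -/

import Mathlib

noncomputable section

namespace QAlg

variable {V : Type*} [AddCommGroup V] [Module ℂ V] [FiniteDimensional ℂ V]

/-- `B` is a (Hermitian, positive definite) inner product on `V`,
conjugate-linear in its first argument. -/
def IsInnerProd (B : V → V → ℂ) : Prop :=
  (∀ x y : V, B x y = starRingEnd ℂ (B y x)) ∧
  (∀ x y z : V, B x (y + z) = B x y + B x z) ∧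
  (∀ (c : ℂ) (x y : V), B x (c • y) = c * B x y) ∧
  (∀ x : V, x ≠ 0 → 0 < (B x x).re)

/-- With respect to the inner product `B`, the monoid `(V, m, u)` is a special
unitary dagger Frobenius involution monoid whose involution corresponds to the
given `*`-operation `st`:
* both the right and the left action of any `a` have adjoint the corresponding
  action of `st a` (so the monoid is dagger Frobenius, its left and right
  involutions coincide — unitarity — and both equal the involution given by `st`);
* speciality `m ∘ m† = id`, expressed via any `B`-orthonormal basis using
  `m† y = ∑ i, e i ⊗ (m (st (e i)) y)`. -/
def IsSpecialUnitaryFrob (m : V →ₗ[ℂ] V →ₗ[ℂ] V) (st : V → V) (B : V → V → ℂ) : Prop :=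
  (∀ (a x y : V), B (m x a) y = B x (m y (st a))) ∧
  (∀ (a x y : V), B (m a x) y = B x (m (st a) y)) ∧
  (∀ (n : ℕ) (e : Module.Basis (Fin n) ℂ V),
    (∀ i j, B (e i) (e j) = if i = j then 1 else 0) →
    ∀ y : V, (∑ i, m (e i) (m (st (e i)) y)) = y)

/-- `N` is a C*-norm for the *-algebra `(V, m, st)`. -/
def IsCstarNorm (m : V →ₗ[ℂ] V →ₗ[ℂ] V) (st : V → V) (N : V → ℝ) : Prop :=
  (∀ a : V, 0 ≤ N a) ∧ (∀ a : V, N a = 0 ↔ a = 0) ∧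
  (∀ (c : ℂ) (a : V), N (c • a) = ‖c‖ * N a) ∧
  (∀ a b : V, N (a + b) ≤ N a + N b) ∧
  (∀ a b : V, N (m a b) ≤ N a * N b) ∧
  (∀ a : V, N (st a) = N a) ∧
  (∀ a : V, N (m (st a) a) = N a * N a)

/-!
A C*-norm is determined by the algebra: `‖a‖² = ‖a⋆a‖` is the spectral radius of `a⋆a`.
Every C*-norm makes the algebra a C*-algebra, on which `⟪x, y⟫ = Tr (L_{x⋆y})`, the trace of
left multiplication, is an inner product: the roots of the characteristic polynomial of `L_{x⋆x}`
are the spectrum of `x⋆x`, which is nonnegative and contains `‖x‖²`. Since `a ↦ Tr (L_a)` is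
tracial, left and right multiplications by `a` and `a⋆` are adjoint, and for an orthonormal basis
`⟪x, ∑ eᵢeᵢ⋆⟫ = Tr (L_{x⋆}) = ⟪x, 1⟫`, which is speciality. Conversely, for any special
unitary Frobenius inner product, `Tr (L_{x⋆y}) = ∑ ⟪eᵢ, x⋆y eᵢ⟫ = ⟪x, y ∑ eᵢeᵢ⋆⟫ = ⟪x, y⟫`, so it is
the trace form; and as `L_a† = L_{a⋆}`, the operator norm of `L_a` is a C*-norm.
-/

namespace IsInnerProd

variable {W : Type*} [AddCommGroup W] [Module ℂ W] {B : W → W → ℂ}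

@[simps]
def innerRight (hB : IsInnerProd B) (x : W) : W →ₗ[ℂ] ℂ where
  toFun := B x
  map_add' := hB.2.1 x
  map_smul' c y := hB.2.2.1 c x y

abbrev toCore (hB : IsInnerProd B) : InnerProductSpace.Core ℂ W where
  inner := B
  conj_inner_symm x y := (hB.1 x y).symm
  re_inner_nonneg x := by
    rcases eq_or_ne x 0 with rfl | hx
    · simp [show B 0 0 = 0 from (hB.innerRight 0).map_zero]
    · exact (hB.2.2.2 x hx).le
  add_left x y z := by rw [hB.1, hB.2.1, map_add, ← hB.1, ← hB.1]
  smul_left x y r := by rw [hB.1, hB.2.2.1, map_mul, ← hB.1]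
  definite x hx := by
    by_contra hne
    simpa [show B x x = 0 from hx] using hB.2.2.2 x hne

theorem ext_right (hB : IsInnerProd B) {y z : W} (h : ∀ x, B x y = B x z) : y = z := by
  by_contra hne
  have hzero : B (y - z) (y - z) = 0 := by
    rw [← hB.innerRight_apply, map_sub, hB.innerRight_apply, hB.innerRight_apply, h, sub_self]
  simpa [hzero] using hB.2.2.2 (y - z) (sub_ne_zero.mpr hne)

theorem exists_orthonormalBasis [FiniteDimensional ℂ W] (hB : IsInnerProd B) :
    ∃ e : Module.Basis (Fin (Module.finrank ℂ W)) ℂ W,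
      ∀ i j, B (e i) (e j) = if i = j then 1 else 0 := by
  let := hB.toCore.toNormedAddCommGroup
  let := InnerProductSpace.ofCore hB.toCore.toCore
  refine ⟨(stdOrthonormalBasis ℂ W).toBasis, fun i j => ?_⟩
  rw [OrthonormalBasis.coe_toBasis]
  exact orthonormal_iff_ite.mp (stdOrthonormalBasis ℂ W).orthonormal i j

theorem trace_eq_sum {ι : Type*} [Fintype ι] [DecidableEq ι] (hB : IsInnerProd B)
    (e : Module.Basis ι ℂ W) (he : ∀ i j, B (e i) (e j) = if i = j then 1 else 0)
    (T : W →ₗ[ℂ] W) :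
    LinearMap.trace ℂ W T = ∑ i, B (e i) (T (e i)) := by
  have hcoord : ∀ i, hB.innerRight (e i) = e.coord i := fun i =>
    e.ext fun j => by simp [innerRight, he, Finsupp.single_apply, eq_comm]
  rw [LinearMap.trace_eq_matrix_trace ℂ e, Matrix.trace]
  refine Finset.sum_congr rfl fun i _ => ?_
  simp only [Matrix.diag_apply, LinearMap.toMatrix_apply]
  exact (LinearMap.congr_fun (hcoord i) (T (e i))).symm

end IsInnerProd

theorem spectrum_lmul {R A : Type*} [CommRing R] [Ring A] [Algebra R A] (a : A) :
    spectrum R (Algebra.lmul R A a) = spectrum R a := by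
  ext z
  simp only [spectrum.mem_iff, ← AlgHom.commutes (Algebra.lmul R A), ← map_sub,
    Algebra.lmul_isUnit_iff]

section LmulTrace

variable (A : Type*) [Ring A] [Algebra ℂ A]

def lmulTrace : A →ₗ[ℂ] ℂ := LinearMap.trace ℂ A ∘ₗ (Algebra.lmul ℂ A).toLinearMap

variable {A}

theorem lmulTrace_apply (a : A) :
    lmulTrace A a = LinearMap.trace ℂ A (Algebra.lmul ℂ A a) := rfl

theorem lmulTrace_mul_comm (a b : A) : lmulTrace A (a * b) = lmulTrace A (b * a) := by
  simp only [lmulTrace_apply, map_mul, LinearMap.trace_mul_comm]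

variable [FiniteDimensional ℂ A]

theorem lmulTrace_eq_sum_roots (a : A) :
    lmulTrace A a = (Algebra.lmul ℂ A a).charpoly.roots.sum :=
  Module.End.trace_eq_sum_roots_charpoly_of_splits (IsAlgClosed.splits _)

theorem mem_roots_charpoly_lmul_iff {a : A} {z : ℂ} :
    z ∈ (Algebra.lmul ℂ A a).charpoly.roots ↔ z ∈ spectrum ℂ a := by
  rw [Polynomial.mem_roots (LinearMap.charpoly_monic _).ne_zero,
    ← Module.End.mem_spectrum_iff_isRoot_charpoly, spectrum_lmul]

end LmulTrace

section StarAlgebra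

variable (A : Type*) [Ring A] [StarRing A] [Algebra ℂ A]

-- On `Matrix (Fin n) (Fin n) ℂ` this is `n * Tr (xᴴ * y)`, the inner product of the paper.
def traceInner (x y : A) : ℂ := lmulTrace A (star x * y)

variable {A}

theorem traceInner_mul_right (a x y : A) :
    traceInner A (x * a) y = traceInner A x (y * star a) := by
  rw [traceInner, traceInner, star_mul, mul_assoc, lmulTrace_mul_comm, mul_assoc]

theorem traceInner_mul_left (a x y : A) :
    traceInner A (a * x) y = traceInner A x (star a * y) := by
  rw [traceInner, traceInner, star_mul, mul_assoc]

variable [FiniteDimensional ℂ A] {B : A → A → ℂ}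

theorem IsSpecialUnitaryFrob.eq_traceInner (hB : IsInnerProd B)
    (hF : IsSpecialUnitaryFrob (LinearMap.mul ℂ A) star B) : B = traceInner A := by
  obtain ⟨e, he⟩ := hB.exists_orthonormalBasis
  have hsum : ∑ i, e i * star (e i) = 1 := by
    simpa using hF.2.2 _ e he 1
  ext x y
  calc B x y = B x (∑ i, y * e i * star (e i)) := by
        simp only [mul_assoc, ← Finset.mul_sum, hsum, mul_one]
    _ = ∑ i, B (x * e i) (y * e i) := by
        rw [← hB.innerRight_apply, map_sum]
        exact Finset.sum_congr rfl fun i _ => by simpa using (hF.1 (e i) x (y * e i)).symm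
    _ = ∑ i, B (e i) (Algebra.lmul ℂ A (star x * y) (e i)) := by
        refine Finset.sum_congr rfl fun i _ => ?_
        simpa [mul_assoc] using hF.2.1 x (e i) (y * e i)
    _ = traceInner A x y := (hB.trace_eq_sum e he _).symm

end StarAlgebra

section CStarAlgebra

open scoped ComplexOrder ComplexStarModule

variable {A : Type*} [CStarAlgebra A]

theorem nonneg_of_mem_spectrum_star_mul_self {x : A} {z : ℂ}
    (hz : z ∈ spectrum ℂ (star x * x)) : 0 ≤ z := by
  obtain ⟨r, rfl⟩ : ∃ r : ℝ, z = r :=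
    ⟨z.re, (IsSelfAdjoint.star_mul_self x).mem_spectrum_eq_re hz⟩
  exact Complex.zero_le_real.mpr
    (spectrum_star_mul_self_nonneg r (spectrum.of_algebraMap_mem ℂ hz))

variable [FiniteDimensional ℂ A]

theorem star_lmulTrace_of_isSelfAdjoint {a : A} (ha : IsSelfAdjoint a) :
    star (lmulTrace A a) = lmulTrace A a := by
  have hreal : ∀ z ∈ (Algebra.lmul ℂ A a).charpoly.roots, star z = z := fun z hz => by
    rw [ha.mem_spectrum_eq_re (mem_roots_charpoly_lmul_iff.mp hz)]
    exact Complex.conj_ofReal _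
  rw [lmulTrace_eq_sum_roots]
  calc star (Multiset.sum _) = ((Algebra.lmul ℂ A a).charpoly.roots.map star).sum :=
        map_multiset_sum (starAddEquiv : ℂ ≃+ ℂ) _
    _ = _ := by rw [Multiset.map_congr rfl hreal, Multiset.map_id']

theorem lmulTrace_star (a : A) : lmulTrace A (star a) = star (lmulTrace A a) := by
  obtain ⟨x, y, hx, hy, rfl⟩ :
      ∃ x y : A, IsSelfAdjoint x ∧ IsSelfAdjoint y ∧ a = x + Complex.I • y :=
    ⟨ℜ a, ℑ a, (ℜ a).prop, (ℑ a).prop, (realPart_add_I_smul_imaginaryPart a).symm⟩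
  simp [star_lmulTrace_of_isSelfAdjoint hx, star_lmulTrace_of_isSelfAdjoint hy, hx.star_eq,
    hy.star_eq]

theorem lmulTrace_star_mul_self_pos {x : A} (hx : x ≠ 0) : 0 < lmulTrace A (star x * x) := by
  have : Nontrivial A := ⟨⟨x, 0, hx⟩⟩
  have hroots : ∀ z ∈ (Algebra.lmul ℂ A (star x * x)).charpoly.roots, 0 ≤ z :=
    fun z hz => nonneg_of_mem_spectrum_star_mul_self (mem_roots_charpoly_lmul_iff.mp hz)
  obtain ⟨z, hz, hz_norm⟩ := spectrum.exists_nnnorm_eq_spectralRadius (star x * x)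
  -- the spectral radius `‖star x * x‖ > 0` is attained at a nonzero root
  have hz0 : z ≠ 0 := by
    rintro rfl
    rw [(IsSelfAdjoint.star_mul_self x).spectralRadius_eq_nnnorm] at hz_norm
    exact hx (by simpa using hz_norm.symm)
  have hz_mem := mem_roots_charpoly_lmul_iff.mpr hz
  rw [lmulTrace_eq_sum_roots]
  exact (lt_of_le_of_ne (hroots z hz_mem) hz0.symm).trans_le
    (Multiset.single_le_sum hroots z hz_mem)

theorem isInnerProd_traceInner : IsInnerProd (traceInner A) := by
  refine ⟨fun x y => ?_, fun x y z => ?_, fun c x y => ?_, fun x hx => ?_⟩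
  · rw [starRingEnd_apply, traceInner, traceInner, ← lmulTrace_star, star_mul, star_star]
  · rw [traceInner, mul_add, map_add]; rfl
  · rw [traceInner, mul_smul_comm, map_smul, smul_eq_mul]; rfl
  · exact (Complex.pos_iff.mp (lmulTrace_star_mul_self_pos hx)).1

theorem sum_mul_star_eq_one_of_orthonormal {ι : Type*} [Fintype ι] [DecidableEq ι]
    (e : Module.Basis ι ℂ A) (he : ∀ i j, traceInner A (e i) (e j) = if i = j then 1 else 0) :
    ∑ i, e i * star (e i) = 1 := by
  refine isInnerProd_traceInner.ext_right fun x => ?_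
  calc traceInner A x (∑ i, e i * star (e i))
      = ∑ i, traceInner A (e i) (star x * e i) := by
        simp only [traceInner, Finset.mul_sum, map_sum]
        exact Finset.sum_congr rfl fun i _ => by rw [← mul_assoc, lmulTrace_mul_comm]
    _ = lmulTrace A (star x) :=
        (isInnerProd_traceInner.trace_eq_sum e he (Algebra.lmul ℂ A (star x))).symm
    _ = traceInner A x 1 := by rw [traceInner, mul_one]

theorem isSpecialUnitaryFrob_traceInner :
    IsSpecialUnitaryFrob (LinearMap.mul ℂ A) star (traceInner A) := by
  refine ⟨fun a x y => ?_, fun a x y => ?_, fun n e he y => ?_⟩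
  · simpa using traceInner_mul_right a x y
  · simpa using traceInner_mul_left a x y
  · simp only [LinearMap.mul_apply', ← mul_assoc, ← Finset.sum_mul,
      sum_mul_star_eq_one_of_orthonormal e he, one_mul]

end CStarAlgebra

section CstarNorm

variable {A : Type*} [Ring A] [StarRing A] [Algebra ℂ A]

theorem isCstarNorm_norm_of_injective {E : Type*} [CStarAlgebra E] (ρ : A →⋆ₐ[ℂ] E)
    (hρ : Function.Injective ρ) : IsCstarNorm (LinearMap.mul ℂ A) star (fun a => ‖ρ a‖) := by
  refine ⟨fun a => norm_nonneg _, fun a => ?_, fun c a => ?_, fun a b => ?_, fun a b => ?_,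
    fun a => ?_, fun a => ?_⟩
  · rw [norm_eq_zero, ← map_zero ρ, hρ.eq_iff]
  · simp [norm_smul]
  · simpa using norm_add_le (ρ a) (ρ b)
  · simpa using norm_mul_le (ρ a) (ρ b)
  · beta_reduce
    rw [map_star, norm_star]
  · beta_reduce
    rw [LinearMap.mul_apply', map_mul, map_star, CStarRing.norm_star_mul_self]

variable [FiniteDimensional ℂ A]

theorem IsInnerProd.exists_isCstarNorm {B : A → A → ℂ} (hB : IsInnerProd B)
    (hL : ∀ a x y, B (a * x) y = B x (star a * y)) :
    ∃ N, IsCstarNorm (LinearMap.mul ℂ A) star N := by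
  let := hB.toCore.toNormedAddCommGroup
  let := InnerProductSpace.ofCore hB.toCore.toCore
  let ρ : A →⋆ₐ[ℂ] (A →L[ℂ] A) :=
    { (Module.End.toContinuousLinearMap A).toAlgHom.comp (Algebra.lmul ℂ A) with
      map_star' a := by
        rw [ContinuousLinearMap.star_eq_adjoint, ContinuousLinearMap.eq_adjoint_iff]
        intro x y
        have h := hL (star a) x y
        rw [star_star] at h
        exact h }
  exact ⟨_, isCstarNorm_norm_of_injective ρ
    ((Module.End.toContinuousLinearMap A).injective.comp Algebra.lmul_injective)⟩

variable [StarModule ℂ A] {N : A → ℝ}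

abbrev IsCstarNorm.toCStarAlgebra (hN : IsCstarNorm (LinearMap.mul ℂ A) star N) :
    CStarAlgebra A :=
  letI : NormedRing A :=
    { AddGroupNorm.toNormedAddCommGroup
        { toFun := N
          map_zero' := (hN.2.1 0).mpr rfl
          add_le' := hN.2.2.2.1
          neg' a := by simpa using hN.2.2.1 (-1) a
          eq_zero_of_map_eq_zero' a := (hN.2.1 a).mp },
      ‹Ring A› with norm_mul_le := hN.2.2.2.2.1 }
  letI : NormedAlgebra ℂ A := { ‹Algebra ℂ A› with norm_smul_le c a := (hN.2.2.1 c a).le }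
  -- `by exact` delays elaboration until the instances above are in place
  letI : CompleteSpace A := by exact FiniteDimensional.complete ℂ A
  { ‹StarRing A›, ‹StarModule ℂ A› with norm_mul_self_le a := (hN.2.2.2.2.2.2 a).ge }

theorem IsCstarNorm.exists_isSpecialUnitaryFrob
    (hN : IsCstarNorm (LinearMap.mul ℂ A) star N) :
    ∃ B, IsInnerProd B ∧ IsSpecialUnitaryFrob (LinearMap.mul ℂ A) star B := by
  let := hN.toCStarAlgebra
  exact ⟨traceInner A, isInnerProd_traceInner, isSpecialUnitaryFrob_traceInner⟩

theorem IsCstarNorm.eq_sqrt_spectralRadius (hN : IsCstarNorm (LinearMap.mul ℂ A) star N)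
    (a : A) : N a = (spectralRadius ℂ (star a * a)).toReal.sqrt := by
  let := hN.toCStarAlgebra
  exact (CStarAlgebra.sqrt_toReal_spectralRadius_star_mul_self_eq_norm a).symm

end CstarNorm

abbrev ringOfBilinear {R W : Type*} [CommRing R] [AddCommGroup W] [Module R W]
    (m : W →ₗ[R] W →ₗ[R] W) (u : W) (hassoc : ∀ a b c : W, m (m a b) c = m a (m b c))
    (hul : ∀ a : W, m u a = a) (hur : ∀ a : W, m a u = a) : Ring W where
  mul a b := m a b
  one := u
  left_distrib a b c := map_add (m a) b c
  right_distrib a b c := LinearMap.map_add₂ m a b c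
  zero_mul a := LinearMap.map_zero₂ m a
  mul_zero a := map_zero (m a)
  mul_assoc := hassoc
  one_mul := hul
  mul_one := hur

theorem stmt17 (m : V →ₗ[ℂ] V →ₗ[ℂ] V) (u : V) (st : V → V)
    (hassoc : ∀ a b c : V, m (m a b) c = m a (m b c))
    (hul : ∀ a : V, m u a = a) (hur : ∀ a : V, m a u = a)
    (hadd : ∀ x y : V, st (x + y) = st x + st y)
    (hsmul : ∀ (c : ℂ) (x : V), st (c • x) = starRingEnd ℂ c • st x)
    (hinvol : ∀ x : V, st (st x) = x)
    (hantihom : ∀ x y : V, st (m x y) = m (st y) (st x)) :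
    ((∃ N : V → ℝ, IsCstarNorm m st N) ↔
      (∃ B : V → V → ℂ, IsInnerProd B ∧ IsSpecialUnitaryFrob m st B)) ∧
    (∀ N₁ N₂ : V → ℝ, IsCstarNorm m st N₁ → IsCstarNorm m st N₂ → N₁ = N₂) ∧
    (∀ B₁ B₂ : V → V → ℂ,
      IsInnerProd B₁ ∧ IsSpecialUnitaryFrob m st B₁ →
      IsInnerProd B₂ ∧ IsSpecialUnitaryFrob m st B₂ → B₁ = B₂) := by
  let : Ring V := ringOfBilinear m u hassoc hul hur
  let : Algebra ℂ V :=
    Algebra.ofModule (fun c x y => LinearMap.map_smul₂ m c x y)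
      (fun c x y => (m x).map_smul c y)
  let : StarRing V :=
    { star := st, star_involutive := hinvol, star_mul := hantihom, star_add := hadd }
  have : StarModule ℂ V := ⟨hsmul⟩
  have hm : LinearMap.mul ℂ V = m := by ext; rfl
  -- now `star = st` holds by definition
  rw [← hm]
  refine ⟨⟨fun ⟨N, hN⟩ => hN.exists_isSpecialUnitaryFrob, fun ⟨B, hB, hF⟩ => ?_⟩, ?_, ?_⟩
  · exact hB.exists_isCstarNorm hF.2.1
  · intro N₁ N₂ h₁ h₂
    funext a
    rw [h₁.eq_sqrt_spectralRadius, h₂.eq_sqrt_spectralRadius]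
  · rintro B₁ B₂ ⟨hB₁, hF₁⟩ ⟨hB₂, hF₂⟩
    rw [hF₁.eq_traceInner hB₁, hF₂.eq_traceInner hB₂]

end QAlg
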